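/- arXiv:2308.04804 — 7 statements merged into one kernel-verified Lean document; each statement's English description precedes it below -/
import Mathlib

section
/- Let $0<n<1$, $k,L,v>0$, and define $\Phi(\xi) = (\xi^{-(n-1)} + kL(n-1)/v)^{-1/(n-1)}$. Then $\Phi$ is convex on the interval $(\xi_0, \infty)$ where $\xi_0 = (\frac{v}{kL(1-n)})^{-1/(1-n)}$. -/
open Real Set

/-! With `p = 1 - n` and `c = kL(1 - n)/v` we have `Φ ξ = (ξ ^ p - c) ^ (1/p)` and `ξ₀ = c ^ (1/p)`.
The derivative `(ξ ^ p - c) ^ (1/p - 1) * ξ ^ (p - 1)` can be rewritten as `(1 - c / ξ ^ p) ^ (1/p - 1)`,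
which is increasing on `ξ > ξ₀` since `c ≥ 0` and `1/p - 1 ≥ 0`; a function with monotone
derivative is convex. -/

theorem hasDerivAt_rpow_sub_const_rpow_inv {p c x : ℝ} (hp : 0 < p) (hx : 0 < x)
    (hcx : c < x ^ p) :
    HasDerivAt (fun y => (y ^ p - c) ^ p⁻¹) ((1 - c / x ^ p) ^ (p⁻¹ - 1)) x := by
  have hxp : 0 < x ^ p := rpow_pos_of_pos hx p
  have hu : 0 < x ^ p - c := sub_pos.2 hcx
  have h := ((hasDerivAt_rpow_const (p := p) (Or.inl hx.ne')).sub_const c).rpow_const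
    (p := p⁻¹) (Or.inl hu.ne')
  convert h using 1
  have hpow : (x ^ p) ^ (p⁻¹ - 1) * x ^ (p - 1) = 1 := by
    rw [← rpow_mul hx.le, ← rpow_add hx, mul_sub, mul_inv_cancel₀ hp.ne']
    simp
  rw [one_sub_div hxp.ne', div_rpow hu.le hxp.le, div_eq_iff (rpow_pos_of_pos hxp _).ne']
  linear_combination (-(x ^ p - c) ^ (p⁻¹ - 1) * p * p⁻¹) * hpow
    - (x ^ p - c) ^ (p⁻¹ - 1) * mul_inv_cancel₀ hp.ne'

theorem monotoneOn_one_sub_div_rpow_rpow {p c q : ℝ} (hp : 0 < p) (hc : 0 ≤ c) (hq : 0 ≤ q) :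
    MonotoneOn (fun x => (1 - c / x ^ p) ^ q) (Ioi (c ^ p⁻¹)) := by
  intro a ha b hb hab
  have ha0 : 0 < a := (rpow_nonneg hc _).trans_lt ha
  have hap : c < a ^ p := (rpow_inv_lt_iff_of_pos hc ha0.le hp).1 ha
  have hapos : 0 < a ^ p := rpow_pos_of_pos ha0 p
  have hle : a ^ p ≤ b ^ p := rpow_le_rpow ha0.le hab hp.le
  refine rpow_le_rpow ?_ ?_ hq
  · rw [sub_nonneg, div_le_one hapos]; exact hap.le
  · gcongr

theorem convexOn_rpow_sub_const_rpow_inv {p c : ℝ} (hp0 : 0 < p) (hp1 : p ≤ 1) (hc : 0 ≤ c) :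
    ConvexOn ℝ (Ioi (c ^ p⁻¹)) (fun x => (x ^ p - c) ^ p⁻¹) := by
  have hderiv : ∀ x ∈ Ioi (c ^ p⁻¹),
      HasDerivAt (fun y => (y ^ p - c) ^ p⁻¹) ((1 - c / x ^ p) ^ (p⁻¹ - 1)) x := by
    intro x hx
    have hx0 : 0 < x := (rpow_nonneg hc _).trans_lt hx
    exact hasDerivAt_rpow_sub_const_rpow_inv hp0 hx0
      ((rpow_inv_lt_iff_of_pos hc hx0.le hp0).1 hx)
  have hdiff : DifferentiableOn ℝ (fun y => (y ^ p - c) ^ p⁻¹) (Ioi (c ^ p⁻¹)) :=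
    fun x hx => (hderiv x hx).differentiableAt.differentiableWithinAt
  refine MonotoneOn.convexOn_of_deriv (convex_Ioi _) hdiff.continuousOn
    (by rwa [interior_Ioi]) ?_
  rw [interior_Ioi]
  refine (monotoneOn_one_sub_div_rpow_rpow hp0 hc ?_).congr fun x hx => (hderiv x hx).deriv.symm
  rw [sub_nonneg, one_le_inv₀ hp0]
  exact hp1

theorem pfr_Phi_convex_of_n_lt_one
    (n k L v : ℝ) (hn0 : 0 < n) (hn1 : n < 1) (hk : 0 < k) (hL : 0 < L) (hv : 0 < v)
    (Φ : ℝ → ℝ)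
    (hΦ : ∀ ξ : ℝ, 0 < ξ →
      Φ ξ = (ξ ^ (-(n - 1)) + k * L * (n - 1) / v) ^ (-(1 / (n - 1)))) :
    ConvexOn ℝ (Set.Ioi ((v / (k * L * (1 - n))) ^ (-(1 / (1 - n))))) Φ := by
  have hp : 0 < 1 - n := sub_pos.2 hn1
  have hb : 0 ≤ v / (k * L * (1 - n)) := by positivity
  have hξ₀ : (v / (k * L * (1 - n))) ^ (-(1 / (1 - n))) = (k * L * (1 - n) / v) ^ (1 - n)⁻¹ := by
    rw [rpow_neg hb, ← inv_rpow hb, inv_div, one_div]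
  have hexp : -(1 / (n - 1)) = (1 - n)⁻¹ := by rw [← neg_sub 1 n, one_div, inv_neg, neg_neg]
  rw [hξ₀]
  refine (convexOn_rpow_sub_const_rpow_inv hp (by linarith) (by positivity)).congr fun x hx => ?_
  have hx0 : 0 < x := (rpow_nonneg (by positivity) _).trans_lt hx
  rw [hΦ x hx0, hexp, neg_sub]
  dsimp only
  congr 1
  ring
end

section
/- Let $\Phi:[C_{min},C_{max}]\to\mathbb{R}$ be concave and differentiable, and let $C_\mathcal{A}:[0,\tau]\to[C_{min},C_{max}]$ be measurable. Suppose there exist a constant $\widetilde{C}\in(C_{min},C_{max})$ and disjoint measurable sets $A^+, A^-\subseteq[0,\tau)$ with $\mu(A^+\cup A^-)=\tau$ such that $C_\mathcal{A}(t)\ge\widetilde{C}$ a.e. on $A^+$ and $C_\mathcal{A}(t)\le\widetilde{C}$ a.e. on $A^-$. Define the bang-bang function $C_b(t)=C_{max}$ for $t\in A^+$ and $C_b(t)=C_{min}$ for $t\in A^-$, and assume $\int_0^\tau C_b(t)\,dt = \int_0^\tau C_\mathcal{A}(t)\,dt$. If $\Phi'$ is nonincreasing, then $\int_0^\tau \Phi(C_b(t))\,dt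 \le \int_0^\tau \Phi(C_\mathcal{A}(t))\,dt$. -/
open Real Set MeasureTheory intervalIntegral

/-!
With `ψ x = Φ x - Φ' C̃ * x`, we have `ψ' = Φ' - Φ' C̃`, which is `≥ 0` on `[Cmin, C̃]` and
`≤ 0` on `[C̃, Cmax]` because `Φ'` is nonincreasing. Hence pushing `C_A(t)` to the endpoint of
`[Cmin, Cmax]` on its side of `C̃` can only lower `ψ`, i.e. `ψ (C_b t) ≤ ψ (C_A t)` a.e.
Integrating over `[0, τ]`, the linear parts cancel because `C_b` and `C_A` have the same
integral.
-/

section TangentLine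

variable {Φ Φ' : ℝ → ℝ}

lemma antitoneOn_sub_mul_of_deriv_le {D : Set ℝ} {c : ℝ} (hD : Convex ℝ D)
    (hderiv : ∀ x ∈ D, HasDerivAt Φ (Φ' x) x) (hle : ∀ x ∈ D, Φ' x ≤ c) :
    AntitoneOn (fun x => Φ x - c * x) D := by
  have hψ : ∀ x ∈ D, HasDerivAt (fun x => Φ x - c * x) (Φ' x - c * 1) x :=
    fun x hx => (hderiv x hx).sub ((hasDerivAt_id x).const_mul c)
  exact antitoneOn_of_hasDerivWithinAt_nonpos hD
    (fun x hx => (hψ x hx).continuousAt.continuousWithinAt)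
    (fun x hx => (hψ x (interior_subset hx)).hasDerivWithinAt)
    (fun x hx => by simpa using hle x (interior_subset hx))

lemma monotoneOn_sub_mul_of_le_deriv {D : Set ℝ} {c : ℝ} (hD : Convex ℝ D)
    (hderiv : ∀ x ∈ D, HasDerivAt Φ (Φ' x) x) (hle : ∀ x ∈ D, c ≤ Φ' x) :
    MonotoneOn (fun x => Φ x - c * x) D := by
  have hψ : ∀ x ∈ D, HasDerivAt (fun x => Φ x - c * x) (Φ' x - c * 1) x :=
    fun x hx => (hderiv x hx).sub ((hasDerivAt_id x).const_mul c)
  exact monotoneOn_of_hasDerivWithinAt_nonneg hD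
    (fun x hx => (hψ x hx).continuousAt.continuousWithinAt)
    (fun x hx => (hψ x (interior_subset hx)).hasDerivWithinAt)
    (fun x hx => by simpa using hle x (interior_subset hx))

variable {a b z : ℝ} (hderiv : ∀ x ∈ Icc a b, HasDerivAt Φ (Φ' x) x)
  (hanti : AntitoneOn Φ' (Icc a b))
include hderiv hanti

lemma antitoneOn_sub_deriv_mul_Icc_right (hz : a ≤ z) :
    AntitoneOn (fun x => Φ x - Φ' z * x) (Icc z b) := by
  have hsub : Icc z b ⊆ Icc a b := Icc_subset_Icc_left hz
  refine antitoneOn_sub_mul_of_deriv_le (convex_Icc z b) (fun x hx => hderiv x (hsub hx)) ?_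
  intro x hx
  exact hanti ⟨hz, hx.1.trans hx.2⟩ (hsub hx) hx.1

lemma monotoneOn_sub_deriv_mul_Icc_left (hz : z ≤ b) :
    MonotoneOn (fun x => Φ x - Φ' z * x) (Icc a z) := by
  have hsub : Icc a z ⊆ Icc a b := Icc_subset_Icc_right hz
  refine monotoneOn_sub_mul_of_le_deriv (convex_Icc a z) (fun x hx => hderiv x (hsub hx)) ?_
  intro x hx
  exact hanti (hsub hx) ⟨hx.1.trans hx.2, hz⟩ hx.2

end TangentLine

section Integral

variable {α : Type*} [MeasurableSpace α] {μ : Measure α}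

lemma integrable_comp_of_continuousOn_of_ae_mem {X E : Type*} [TopologicalSpace X]
    [MeasurableSpace X] [OpensMeasurableSpace X] [T2Space X] [NormedAddCommGroup E]
    [SecondCountableTopologyEither X E] [IsFiniteMeasure μ] {Φ : X → E} {K : Set X}
    (hK : IsCompact K) (hΦ : ContinuousOn Φ K) {f : α → X} (hf : Measurable f)
    (hfK : ∀ᵐ t ∂μ, f t ∈ K) : Integrable (fun t => Φ (f t)) μ := by
  have hmap : (μ.map f).restrict K = μ.map f :=
    Measure.restrict_eq_self_of_ae_mem (ae_map_iff hf.aemeasurable hK.measurableSet |>.2 hfK)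
  have hΦm : AEStronglyMeasurable Φ (μ.map f) :=
    hmap ▸ hΦ.aestronglyMeasurable hK.measurableSet
  obtain ⟨C, hC⟩ := hK.exists_bound_of_continuousOn hΦ
  exact .of_bound (hΦm.comp_measurable hf) C (hfK.mono fun t ht => hC _ ht)

lemma integral_comp_le_of_sub_mul_le {Φ : ℝ → ℝ} {f g : α → ℝ} (c : ℝ)
    (hf : Integrable f μ) (hg : Integrable g μ)
    (hΦf : Integrable (fun t => Φ (f t)) μ) (hΦg : Integrable (fun t => Φ (g t)) μ)
    (hfg : ∫ t, f t ∂μ = ∫ t, g t ∂μ)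
    (h : ∀ᵐ t ∂μ, Φ (f t) - c * f t ≤ Φ (g t) - c * g t) :
    ∫ t, Φ (f t) ∂μ ≤ ∫ t, Φ (g t) ∂μ := by
  have : ∫ t, (Φ (f t) - c * f t) ∂μ ≤ ∫ t, (Φ (g t) - c * g t) ∂μ :=
    integral_mono_ae (hΦf.sub (hf.const_mul c)) (hΦg.sub (hg.const_mul c)) h
  rw [integral_sub hΦf (hf.const_mul c), integral_sub hΦg (hg.const_mul c),
    MeasureTheory.integral_const_mul, MeasureTheory.integral_const_mul, hfg] at this
  linarith

lemma ae_restrict_Ioc_mem_of_subset_Ico {S : Set ℝ} {a b : ℝ} (hS : MeasurableSet S)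
    (hsub : S ⊆ Ico a b) (hvol : volume S = ENNReal.ofReal (b - a)) :
    ∀ᵐ t ∂volume.restrict (Ioc a b), t ∈ S := by
  have hIco : S =ᵐ[volume] Ico a b :=
    ae_eq_of_subset_of_measure_ge hsub (by rw [hvol, Real.volume_Ico]) hS.nullMeasurableSet
      measure_Ico_lt_top.ne
  rw [Measure.restrict_congr_set (hIco.trans Ico_ae_eq_Ioc).symm]
  exact ae_restrict_mem hS

end Integral

theorem bangbang_comparison_general
    (τ Cmin Cmax Ctilde : ℝ) (hτ : 0 < τ) (hCC : Cmin < Cmax)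
    (hCt : Ctilde ∈ Set.Ioo Cmin Cmax)
    (Φ Φ' : ℝ → ℝ)
    (hderiv : ∀ x ∈ Set.Icc Cmin Cmax, HasDerivAt Φ (Φ' x) x)
    (hanti : AntitoneOn Φ' (Set.Icc Cmin Cmax))
    (CA : ℝ → ℝ) (hmeas : Measurable CA)
    (hrange : ∀ t, CA t ∈ Set.Icc Cmin Cmax)
    (Aplus Aminus : Set ℝ)
    (hAp : MeasurableSet Aplus) (hAm : MeasurableSet Aminus)
    (hApsub : Aplus ⊆ Set.Ico 0 τ) (hAmsub : Aminus ⊆ Set.Ico 0 τ)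
    (hunion : volume (Aplus ∪ Aminus) = ENNReal.ofReal τ)
    (hup : ∀ᵐ t ∂(volume.restrict Aplus), Ctilde ≤ CA t)
    (hdown : ∀ᵐ t ∂(volume.restrict Aminus), CA t ≤ Ctilde)
    (Cb : ℝ → ℝ) (hmeasb : Measurable Cb)
    (hCbp : ∀ t ∈ Aplus, Cb t = Cmax) (hCbm : ∀ t ∈ Aminus, Cb t = Cmin)
    (hiso : ∫ t in (0 : ℝ)..τ, Cb t = ∫ t in (0 : ℝ)..τ, CA t) :
    ∫ t in (0 : ℝ)..τ, Φ (Cb t) ≤ ∫ t in (0 : ℝ)..τ, Φ (CA t) := by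
  have hS : ∀ᵐ t ∂volume.restrict (Ioc 0 τ), t ∈ Aplus ∪ Aminus :=
    ae_restrict_Ioc_mem_of_subset_Ico (hAp.union hAm) (union_subset hApsub hAmsub)
      (by rwa [sub_zero])
  have hCbI : ∀ᵐ t ∂volume.restrict (Ioc 0 τ), Cb t ∈ Icc Cmin Cmax := by
    filter_upwards [hS] with t ht
    rcases ht with ht | ht
    · rw [hCbp t ht]; exact right_mem_Icc.2 hCC.le
    · rw [hCbm t ht]; exact left_mem_Icc.2 hCC.le
  have htangent : ∀ᵐ t ∂volume.restrict (Ioc 0 τ),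
      Φ (Cb t) - Φ' Ctilde * Cb t ≤ Φ (CA t) - Φ' Ctilde * CA t := by
    filter_upwards [hS, ae_restrict_of_ae ((ae_restrict_iff' hAp).1 hup),
      ae_restrict_of_ae ((ae_restrict_iff' hAm).1 hdown)] with t ht hu hd
    rcases ht with ht | ht
    · rw [hCbp t ht]
      exact antitoneOn_sub_deriv_mul_Icc_right hderiv hanti hCt.1.le
        ⟨hu ht, (hrange t).2⟩ ⟨hCt.2.le, le_rfl⟩ (hrange t).2
    · rw [hCbm t ht]
      exact monotoneOn_sub_deriv_mul_Icc_left hderiv hanti hCt.2.le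
        ⟨le_rfl, hCt.1.le⟩ ⟨(hrange t).1, hd ht⟩ (hrange t).1
  have hΦ : ContinuousOn Φ (Icc Cmin Cmax) :=
    fun x hx => (hderiv x hx).continuousAt.continuousWithinAt
  rw [integral_of_le hτ.le, integral_of_le hτ.le] at hiso ⊢
  exact integral_comp_le_of_sub_mul_le (Φ' Ctilde)
    (integrable_comp_of_continuousOn_of_ae_mem isCompact_Icc continuousOn_id hmeasb hCbI)
    (integrable_comp_of_continuousOn_of_ae_mem isCompact_Icc continuousOn_id hmeas
      (.of_forall hrange))
    (integrable_comp_of_continuousOn_of_ae_mem isCompact_Icc hΦ hmeasb hCbI)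
    (integrable_comp_of_continuousOn_of_ae_mem isCompact_Icc hΦ hmeas (.of_forall hrange))
    hiso htangent

theorem bangbang_comparison
    (τ Cmin Cmax Ctilde : ℝ) (hτ : 0 < τ) (hC : 0 < Cmin) (hCC : Cmin < Cmax)
    (hCt : Ctilde ∈ Set.Ioo Cmin Cmax)
    (Φ Φ' : ℝ → ℝ)
    (hconc : ConcaveOn ℝ (Set.Icc Cmin Cmax) Φ)
    (hderiv : ∀ x ∈ Set.Icc Cmin Cmax, HasDerivAt Φ (Φ' x) x)
    (hanti : AntitoneOn Φ' (Set.Icc Cmin Cmax))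
    (CA : ℝ → ℝ) (hmeas : Measurable CA)
    (hrange : ∀ t, CA t ∈ Set.Icc Cmin Cmax)
    (Aplus Aminus : Set ℝ)
    (hAp : MeasurableSet Aplus) (hAm : MeasurableSet Aminus)
    (hApsub : Aplus ⊆ Set.Ico 0 τ) (hAmsub : Aminus ⊆ Set.Ico 0 τ)
    (hdisj : Disjoint Aplus Aminus)
    (hunion : volume (Aplus ∪ Aminus) = ENNReal.ofReal τ)
    (hup : ∀ᵐ t ∂(volume.restrict Aplus), Ctilde ≤ CA t)
    (hdown : ∀ᵐ t ∂(volume.restrict Aminus), CA t ≤ Ctilde)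
    (Cb : ℝ → ℝ) (hmeasb : Measurable Cb)
    (hCbp : ∀ t ∈ Aplus, Cb t = Cmax) (hCbm : ∀ t ∈ Aminus, Cb t = Cmin)
    (hiso : ∫ t in (0 : ℝ)..τ, Cb t = ∫ t in (0 : ℝ)..τ, CA t) :
    ∫ t in (0 : ℝ)..τ, Φ (Cb t) ≤ ∫ t in (0 : ℝ)..τ, Φ (CA t) :=
  bangbang_comparison_general τ Cmin Cmax Ctilde hτ hCC hCt Φ Φ' hderiv hanti CA hmeas hrange Aplus
    Aminus hAp hAm hApsub hAmsub hunion hup hdown Cb hmeasb hCbp hCbm hiso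
end

section
/- Let $u:[0,\tau)\to[C_{min},C_{max}]$ be measurable with $\frac{1}{\tau}\int_0^\tau u(t)\,dt = \overline{C}$, where $C_{min}<\overline{C}<C_{max}$. Set $\mu_+ = \frac{\overline{C}-C_{min}}{C_{max}-C_{min}}\tau$. Then there exists $\widetilde{C}\in(C_{min},C_{max})$ and disjoint measurable sets $A^+,A^-\subseteq[0,\tau)$ with $\mu(A^+)=\mu_+$, $\mu(A^-)=\tau-\mu_+$, $u(t)\ge\widetilde{C}$ a.e. on $A^+$, and $u(t)\le\widetilde{C}$ a.e. on $A^-$. -/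
/-! The threshold is a quantile of `u` on `[0, τ)`: the supremum `c` of the levels at which
`|{u ≥ c}| ≥ μ₊` satisfies `|{u > c}| ≤ μ₊ ≤ |{u ≥ c}|`, by continuity of measure along monotone
sequences of level sets. If this quantile is `Cmin` or `Cmax`, comparing `u` with a two-step
function and using the mean condition shows that every level strictly between them, in
particular the midpoint, is a quantile as well. Then `A⁺` is `{u > c}` together with a piece of
`{u = c}` of the missing measure, cut off at a point found by the intermediate value theorem for
the 1-Lipschitz function `x ↦ |{u = c} ∩ (-∞, x)|`. -/

open Real Set MeasureTheory intervalIntegral Filter ENNReal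

section Levels

variable {α : Type*} [MeasurableSpace α] {μ : Measure α} [IsFiniteMeasure μ] {f : α → ℝ}
  {a b : ℝ}

theorem exists_measure_lt_le_le_measure_le (hf : Measurable f) (hab : a ≤ b) {p : ℝ≥0∞}
    (ha : p ≤ μ {x | a ≤ f x}) (hb : μ {x | b < f x} ≤ p) :
    ∃ c ∈ Icc a b, μ {x | c < f x} ≤ p ∧ p ≤ μ {x | c ≤ f x} := by
  set S := {c | c ≤ b ∧ p ≤ μ {x | c ≤ f x}}
  have haS : a ∈ S := ⟨hab, ha⟩
  have hS : BddAbove S := ⟨b, fun _ hc => hc.1⟩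
  have hcb : sSup S ≤ b := csSup_le ⟨a, haS⟩ fun _ hc => hc.1
  refine ⟨sSup S, ⟨le_csSup hS haS, hcb⟩, ?_, ?_⟩
  · rcases hcb.eq_or_lt with hcb | hcb
    · rwa [hcb]
    obtain ⟨y, hy_anti, hy_mem, hy_lim⟩ := exists_seq_strictAnti_tendsto' hcb
    have hunion : {x | sSup S < f x} = ⋃ n, {x | y n ≤ f x} := by
      ext x
      simp only [mem_ofPred_eq, mem_iUnion]
      refine ⟨fun hx => ?_, fun ⟨n, hn⟩ => (hy_mem n).1.trans_le hn⟩
      exact ((hy_lim.eventually (gt_mem_nhds hx)).exists).imp fun _ => le_of_lt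
    have hyS : ∀ n, μ {x | y n ≤ f x} ≤ p := fun n =>
      (not_le.1 fun h => not_le.2 (hy_mem n).1 (le_csSup hS ⟨(hy_mem n).2.le, h⟩)).le
    rw [hunion]
    exact le_of_tendsto' (tendsto_measure_iUnion_atTop fun m n hmn x hx =>
      (hy_anti.antitone hmn).trans hx) hyS
  · obtain ⟨y, hy_mono, hy_lim, hyS⟩ := exists_seq_tendsto_sSup ⟨a, haS⟩ hS
    have hinter : {x | sSup S ≤ f x} = ⋂ n, {x | y n ≤ f x} := by
      ext x
      simp only [mem_ofPred_eq, mem_iInter]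
      exact ⟨fun hx n => (le_csSup hS (hyS n)).trans hx, fun hx => le_of_tendsto' hy_lim hx⟩
    rw [hinter]
    exact ge_of_tendsto' (tendsto_measure_iInter_atTop
      (fun _ => (hf measurableSet_Ici).nullMeasurableSet)
      (fun m n hmn x hx => (hy_mono hmn).trans hx) ⟨0, measure_ne_top _ _⟩) fun n => (hyS n).2

theorem integral_const_add_indicator_add_indicator {s t : Set α}
    (hs : MeasurableSet s) (ht : MeasurableSet t) (k y z : ℝ) :
    ∫ x, k + s.indicator (fun _ => y) x + t.indicator (fun _ => z) x ∂μ
      = k * μ.real univ + y * μ.real s + z * μ.real t := by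
  have hky : Integrable (fun x => k + s.indicator (fun _ => y) x) μ :=
    (integrable_const k).add ((integrable_const y).indicator hs)
  rw [integral_add hky ((integrable_const z).indicator ht),
    integral_add (integrable_const k) ((integrable_const y).indicator hs),
    MeasureTheory.integral_const, integral_indicator_const _ hs, integral_indicator_const _ ht]
  simp only [smul_eq_mul]
  ring

theorem le_integral_of_two_levels (hfm : Measurable f) (hf : Integrable f μ)
    {c₁ c₂ : ℝ} (ha : ∀ᵐ x ∂μ, a ≤ f x) (h₁ : a ≤ c₁) :
    a * μ.real univ + (c₁ - a) * μ.real {x | c₁ < f x}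
      + (c₂ - c₁) * μ.real {x | c₂ ≤ f x} ≤ ∫ x, f x ∂μ := by
  have hs : MeasurableSet {x | c₁ < f x} := hfm measurableSet_Ioi
  have ht : MeasurableSet {x | c₂ ≤ f x} := hfm measurableSet_Ici
  rw [← integral_const_add_indicator_add_indicator hs ht]
  refine integral_mono_ae (((integrable_const _).add ((integrable_const _).indicator hs)).add
    ((integrable_const _).indicator ht)) hf (ha.mono fun x hx => ?_)
  simp only [indicator_apply, mem_ofPred_eq]
  split_ifs <;> linarith

theorem integral_le_of_two_levels (hfm : Measurable f) (hf : Integrable f μ)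
    {c : ℝ} (hb : ∀ᵐ x ∂μ, f x ≤ b) (h₂ : c ≤ b) :
    ∫ x, f x ∂μ ≤ a * μ.real univ + (c - a) * μ.real {x | a < f x}
      + (b - c) * μ.real {x | c ≤ f x} := by
  have hs : MeasurableSet {x | a < f x} := hfm measurableSet_Ioi
  have ht : MeasurableSet {x | c ≤ f x} := hfm measurableSet_Ici
  rw [← integral_const_add_indicator_add_indicator hs ht]
  refine integral_mono_ae hf (((integrable_const _).add ((integrable_const _).indicator hs)).add
    ((integrable_const _).indicator ht)) (hb.mono fun x hx => ?_)
  simp only [indicator_apply, mem_ofPred_eq]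
  split_ifs <;> linarith

theorem measure_lt_le_of_le_measure_max_le (hf : Measurable f)
    (hrange : ∀ᵐ x ∂μ, f x ∈ Icc a b) {p : ℝ} (hp : 0 ≤ p)
    (hmean : ∫ x, f x ∂μ = a * μ.real univ + (b - a) * p) {c : ℝ}
    (hac : a < c) (hcb : c ≤ b)
    (hb : ENNReal.ofReal p ≤ μ {x | b ≤ f x}) :
    μ {x | c < f x} ≤ ENNReal.ofReal p := by
  have hlow := le_integral_of_two_levels (c₂ := b) hf (.of_mem_Icc a b hf.aemeasurable hrange)
    (hrange.mono fun _ hx => hx.1) hac.le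
  have hpb : p ≤ μ.real {x | b ≤ f x} := (ofReal_le_iff_le_toReal (measure_ne_top _ _)).1 hb
  have : (c - a) * μ.real {x | c < f x} ≤ (c - a) * p := by
    nlinarith [mul_le_mul_of_nonneg_left hpb (sub_nonneg.2 hcb)]
  exact (le_ofReal_iff_toReal_le (measure_ne_top _ _) hp).2
    (le_of_mul_le_mul_left this (sub_pos.2 hac))

theorem le_measure_le_of_measure_min_lt_le (hf : Measurable f)
    (hrange : ∀ᵐ x ∂μ, f x ∈ Icc a b) {p : ℝ} (hp : 0 ≤ p)
    (hmean : ∫ x, f x ∂μ = a * μ.real univ + (b - a) * p) {c : ℝ}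
    (hac : a ≤ c) (hcb : c < b)
    (ha : μ {x | a < f x} ≤ ENNReal.ofReal p) :
    ENNReal.ofReal p ≤ μ {x | c ≤ f x} := by
  have hup := integral_le_of_two_levels (a := a) hf (.of_mem_Icc a b hf.aemeasurable hrange)
    (hrange.mono fun _ hx => hx.2) hcb.le
  have hpa : μ.real {x | a < f x} ≤ p := toReal_le_of_le_ofReal hp ha
  have : (b - c) * p ≤ (b - c) * μ.real {x | c ≤ f x} := by
    nlinarith [mul_le_mul_of_nonneg_left hpa (sub_nonneg.2 hac)]
  exact (ofReal_le_iff_le_toReal (measure_ne_top _ _)).2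
    (le_of_mul_le_mul_left this (sub_pos.2 hcb))

theorem exists_mem_Ioo_measure_lt_le_le_measure_le (hf : Measurable f) (hab : a < b)
    (hrange : ∀ᵐ x ∂μ, f x ∈ Icc a b) {p : ℝ} (hp : 0 ≤ p) (hpμ : p ≤ μ.real univ)
    (hmean : ∫ x, f x ∂μ = a * μ.real univ + (b - a) * p) :
    ∃ c ∈ Ioo a b,
      μ {x | c < f x} ≤ ENNReal.ofReal p ∧ ENNReal.ofReal p ≤ μ {x | c ≤ f x} := by
  have ha : ENNReal.ofReal p ≤ μ {x | a ≤ f x} := by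
    rw [measure_congr (eventuallyEq_univ.2 (hrange.mono fun _ hx => hx.1))]
    exact (ofReal_le_iff_le_toReal (measure_ne_top _ _)).2 hpμ
  have hb : μ {x | b < f x} ≤ ENNReal.ofReal p := by
    have : μ {x | b < f x} = 0 := by
      simpa only [not_le] using ae_iff.1 (hrange.mono fun _ hx => hx.2)
    simp only [this, zero_le]
  obtain ⟨c, ⟨hac, hcb⟩, hgt, hge⟩ := exists_measure_lt_le_le_measure_le hf hab.le ha hb
  have hm : (a + b) / 2 ∈ Ioo a b := ⟨left_lt_add_div_two.2 hab, add_div_two_lt_right.2 hab⟩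
  rcases hcb.eq_or_lt with hcb | hcb
  · rw [hcb] at hge
    exact ⟨(a + b) / 2, hm,
      measure_lt_le_of_le_measure_max_le hf hrange hp hmean hm.1 hm.2.le hge,
      hge.trans (measure_mono fun x (hx : b ≤ f x) => hm.2.le.trans hx)⟩
  rcases hac.eq_or_lt with hac | hac
  · rw [← hac] at hgt
    exact ⟨(a + b) / 2, hm,
      (measure_mono fun x (hx : (a + b) / 2 < f x) => hm.1.trans hx).trans hgt,
      le_measure_le_of_measure_min_lt_le hf hrange hp hmean hm.1.le hm.2 hgt⟩
  exact ⟨c, ⟨hac, hcb⟩, hgt, hge⟩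

end Levels

theorem lipschitzWith_measureReal_inter_Iio {s : Set ℝ} (hs : volume s ≠ ∞) :
    LipschitzWith 1 fun x => volume.real (s ∩ Iio x) := by
  refine LipschitzWith.of_le_add fun x y => ?_
  have hcover : s ∩ Iio x ⊆ (s ∩ Iio y) ∪ Ico y x := by
    rintro t ⟨hts, htx⟩
    by_cases hty : t < y
    · exact Or.inl ⟨hts, hty⟩
    · exact Or.inr ⟨not_lt.1 hty, htx⟩
  calc volume.real (s ∩ Iio x)
      ≤ volume.real (s ∩ Iio y) + volume.real (Ico y x) :=
        (measureReal_mono hcover (measure_union_ne_top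
          (measure_ne_top_of_subset inter_subset_left hs) measure_Ico_lt_top.ne)).trans
          (measureReal_union_le _ _)
    _ ≤ volume.real (s ∩ Iio y) + dist x y := by
        rw [Real.volume_real_Ico, Real.dist_eq]
        gcongr
        exact max_le (le_abs_self _) (abs_nonneg _)

theorem exists_subset_volume_eq {s : Set ℝ} {a b : ℝ} (hs : MeasurableSet s)
    (hsub : s ⊆ Ico a b) {r : ℝ≥0∞} (hr : r ≤ volume s) :
    ∃ t ⊆ s, MeasurableSet t ∧ volume t = r := by
  have hfin : volume s ≠ ∞ := measure_ne_top_of_subset hsub measure_Ico_lt_top.ne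
  set F : ℝ → ℝ := fun x => volume.real (s ∩ Iio x)
  have hFa : F a = 0 := by
    have : s ∩ Iio a = ∅ :=
      eq_empty_of_forall_notMem fun t (ht : t ∈ s ∩ Iio a) => not_lt.2 (hsub ht.1).1 ht.2
    simp only [F, this, measureReal_empty]
  have hFb : F b = volume.real s := by
    simp only [F, inter_eq_left.2 (hsub.trans Ico_subset_Iio_self)]
  obtain ⟨x, -, hx⟩ := intermediate_value_uIcc
    (lipschitzWith_measureReal_inter_Iio hfin).continuous.continuousOn
    (Icc_subset_uIcc (by rw [hFa, hFb]; exact ⟨toReal_nonneg, toReal_mono hfin hr⟩) :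
      r.toReal ∈ uIcc (F a) (F b))
  refine ⟨s ∩ Iio x, inter_subset_left, hs.inter measurableSet_Iio, ?_⟩
  exact (toReal_eq_toReal_iff' (measure_ne_top_of_subset inter_subset_left hfin)
    (ne_top_of_le_ne_top hfin hr)).1 hx

theorem exists_levelset_split {u : ℝ → ℝ} (hu : Measurable u) {a b c : ℝ} {r : ℝ≥0∞}
    (hgt : volume.restrict (Ico a b) {t | c < u t} ≤ r)
    (hge : r ≤ volume.restrict (Ico a b) {t | c ≤ u t}) :
    ∃ A ⊆ Ico a b, MeasurableSet A ∧ volume A = r ∧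
      (∀ t ∈ A, c ≤ u t) ∧ ∀ t ∈ Ico a b \ A, u t ≤ c := by
  have hF : MeasurableSet ({t | c < u t} ∩ Ico a b) :=
    (hu measurableSet_Ioi).inter measurableSet_Ico
  have hE : MeasurableSet ({t | c ≤ u t} ∩ Ico a b) :=
    (hu measurableSet_Ici).inter measurableSet_Ico
  rw [Measure.restrict_apply' measurableSet_Ico] at hgt hge
  obtain ⟨M, hM, hMmeas, hMvol⟩ := exists_subset_volume_eq (hE.diff hF)
    (sdiff_subset.trans inter_subset_right) ((tsub_le_tsub_right hge _).trans le_measure_sdiff)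
  refine ⟨_ ∪ M,
    union_subset inter_subset_right (hM.trans (sdiff_subset.trans inter_subset_right)),
    hF.union hMmeas, ?_, ?_, fun t ht => not_lt.1 fun h => ht.2 (Or.inl ⟨h, ht.1⟩)⟩
  · rw [measure_union (disjoint_sdiff_right.mono_right hM) hMmeas, hMvol,
      add_tsub_cancel_of_le hgt]
  · rintro t (ht | ht)
    exacts [ht.1.le, (hM ht).1.1]

theorem levelset_decomposition_general
    (τ Cmin Cmax Cbar : ℝ) (hτ : 0 < τ)
    (h1 : Cmin < Cbar) (h2 : Cbar < Cmax)
    (u : ℝ → ℝ) (hmeas : Measurable u)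
    (hrange : ∀ t ∈ Set.Ico (0 : ℝ) τ, u t ∈ Set.Icc Cmin Cmax)
    (hmean : (1 / τ) * ∫ t in (0 : ℝ)..τ, u t = Cbar) :
    ∃ Ctilde ∈ Set.Ioo Cmin Cmax, ∃ Aplus Aminus : Set ℝ,
      MeasurableSet Aplus ∧ MeasurableSet Aminus ∧
      Aplus ⊆ Set.Ico 0 τ ∧ Aminus ⊆ Set.Ico 0 τ ∧
      Disjoint Aplus Aminus ∧
      volume Aplus = ENNReal.ofReal ((Cbar - Cmin) / (Cmax - Cmin) * τ) ∧
      volume Aminus = ENNReal.ofReal (τ - (Cbar - Cmin) / (Cmax - Cmin) * τ) ∧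
      (∀ᵐ t ∂(volume.restrict Aplus), Ctilde ≤ u t) ∧
      (∀ᵐ t ∂(volume.restrict Aminus), u t ≤ Ctilde) := by
  set p := (Cbar - Cmin) / (Cmax - Cmin) * τ
  have hd : 0 < Cmax - Cmin := sub_pos.2 (h1.trans h2)
  have hp : 0 ≤ p := mul_nonneg (div_nonneg (sub_nonneg.2 h1.le) hd.le) hτ.le
  have hpτ : p ≤ τ := mul_le_of_le_one_left hτ.le ((div_le_one hd).2 (by linarith))
  have hvol : (volume.restrict (Ico 0 τ)).real univ = τ := by simp [hτ.le]
  have hint : ∫ t in Ico 0 τ, u t = Cmin * τ + (Cmax - Cmin) * p := by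
    rw [integral_Ico_eq_integral_Ioo, ← integral_Ioc_eq_integral_Ioo,
      ← intervalIntegral.integral_of_le hτ.le]
    simp only [p, ← hmean]
    field_simp
    ring
  obtain ⟨c, hc, hgt, hge⟩ := exists_mem_Ioo_measure_lt_le_le_measure_le hmeas (h1.trans h2)
    (ae_restrict_of_forall_mem measurableSet_Ico hrange) hp (by rwa [hvol]) (by rwa [hvol])
  obtain ⟨A, hAI, hA, hAvol, hAup, hAlow⟩ := exists_levelset_split hmeas hgt hge
  refine ⟨c, hc, A, Ico 0 τ \ A, hA, measurableSet_Ico.diff hA, hAI, sdiff_subset,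
    disjoint_sdiff_right, hAvol, ?_, ae_restrict_of_forall_mem hA hAup,
    ae_restrict_of_forall_mem (measurableSet_Ico.diff hA) hAlow⟩
  rw [measure_sdiff hAI hA.nullMeasurableSet (hAvol ▸ ofReal_ne_top), hAvol, Real.volume_Ico,
    sub_zero, ENNReal.ofReal_sub _ hp]

theorem levelset_decomposition
    (τ Cmin Cmax Cbar : ℝ) (hτ : 0 < τ) (hC : 0 < Cmin)
    (h1 : Cmin < Cbar) (h2 : Cbar < Cmax)
    (u : ℝ → ℝ) (hmeas : Measurable u)
    (hrange : ∀ t ∈ Set.Ico (0 : ℝ) τ, u t ∈ Set.Icc Cmin Cmax)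
    (hmean : (1 / τ) * ∫ t in (0 : ℝ)..τ, u t = Cbar) :
    ∃ Ctilde ∈ Set.Ioo Cmin Cmax, ∃ Aplus Aminus : Set ℝ,
      MeasurableSet Aplus ∧ MeasurableSet Aminus ∧
      Aplus ⊆ Set.Ico 0 τ ∧ Aminus ⊆ Set.Ico 0 τ ∧
      Disjoint Aplus Aminus ∧
      volume Aplus = ENNReal.ofReal ((Cbar - Cmin) / (Cmax - Cmin) * τ) ∧
      volume Aminus = ENNReal.ofReal (τ - (Cbar - Cmin) / (Cmax - Cmin) * τ) ∧
      (∀ᵐ t ∂(volume.restrict Aplus), Ctilde ≤ u t) ∧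
      (∀ᵐ t ∂(volume.restrict Aminus), u t ≤ Ctilde) :=
  levelset_decomposition_general τ Cmin Cmax Cbar hτ h1 h2 u hmeas hrange hmean
end

section
/- (Optimality of bang-bang controls, $n>1$, single input.) Let $\Phi:[C_{min},C_{max}]\to\mathbb{R}$ be concave and differentiable with nonincreasing derivative. Let $A^-\subseteq[0,\tau)$ be measurable with $\mu(A^-)=\frac{C_{max}-\overline{C}}{C_{max}-C_{min}}\tau$, and define $u(t)=C_{min}$ on $A^-$, $u(t)=C_{max}$ on $[0,\tau)\setminus A^-$. Then $u$ satisfies $\frac{1}{\tau}\int_0^\tau u = \overline{C}$ and for every measurable $w:[0,\tau)\to[C_{min},C_{max}]$ with $\frac{1}{\tau}\int_0^\tau w = \overline{C}$, we have $\int_0^\tau\Phi(u(t))\,dt \le \int_0^\tau\Phi(w(t))\,dt$. -/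
open Real Set MeasureTheory intervalIntegral Classical

/-! On `[Cmin, Cmax]` the concave `Φ` lies above its chord `ℓ`, with equality at the endpoints.
A bang-bang control only takes endpoint values, so `∫ Φ ∘ u = ∫ ℓ ∘ u`; since `ℓ` is affine,
`∫ ℓ ∘ u = ∫ ℓ ∘ w` for every control `w` with the same mean, and `∫ ℓ ∘ w ≤ ∫ Φ ∘ w`. -/

lemma ConcaveOn.add_slope_mul_le {f : ℝ → ℝ} {a b x : ℝ} (hf : ConcaveOn ℝ (Icc a b) f)
    (hx : x ∈ Icc a b) : f a + slope f a b * (x - a) ≤ f x := by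
  rcases hx.1.eq_or_lt with rfl | hax
  · simp
  have hab := hax.trans_le hx.2
  have hslope : slope f a b ≤ slope f a x :=
    hf.slope_anti (left_mem_Icc.2 hab.le) ⟨hx, hax.ne'⟩
      ⟨right_mem_Icc.2 hab.le, hab.ne'⟩ hx.2
  calc f a + slope f a b * (x - a) ≤ f a + slope f a x * (x - a) := by gcongr
    _ = f x := by rw [slope_def_field]; field_simp; ring

lemma intervalIntegral_ite_mem_of_subset_Ico {A : Set ℝ} {a b : ℝ} (hab : a ≤ b)
    (hA : MeasurableSet A) (hAsub : A ⊆ Ico a b) (p q : ℝ) :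
    ∫ t in a..b, (if t ∈ A then p else q) = p * volume.real A + q * (b - a - volume.real A) := by
  rw [integral_of_le hab, ← integral_Ico_eq_integral_Ioc]
  change ∫ t in Ico a b, A.piecewise (fun _ => p) (fun _ => q) t = _
  rw [integral_piecewise hA integrableOn_const integrableOn_const, setIntegral_const,
    setIntegral_const, measureReal_restrict_apply hA, measureReal_restrict_apply hA.compl,
    inter_eq_left.2 hAsub, ← sdiff_eq_compl_inter,
    measureReal_sdiff hAsub hA measure_Ico_lt_top.ne, Real.volume_real_Ico_of_le hab]
  simp only [smul_eq_mul]
  ring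

section

variable {α : Type*} [MeasurableSpace α] {μ : Measure α}

lemma ContinuousOn.integrable_comp_of_mem_Icc [IsFiniteMeasure μ] {Φ : ℝ → ℝ} {a b : ℝ}
    (hab : a ≤ b) (hΦ : ContinuousOn Φ (Icc a b)) {w : α → ℝ} (hw : Measurable w)
    (hw_mem : ∀ t, w t ∈ Icc a b) : Integrable (fun t => Φ (w t)) μ := by
  have hmeas : Measurable fun t => IccExtend hab ((Icc a b).domRestrict Φ) (w t) :=
    (hΦ.domRestrict.Icc_extend' (h := hab)).measurable.comp hw
  simp only [IccExtend_of_mem _ _ (hw_mem _)] at hmeas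
  obtain ⟨M, hM⟩ := isCompact_Icc.exists_bound_of_continuousOn hΦ
  exact .of_bound hmeas.aestronglyMeasurable M (ae_of_all _ fun t => hM _ (hw_mem t))

lemma integral_const_add_mul_sub [IsFiniteMeasure μ] {v : α → ℝ} (hv : Integrable v μ)
    (c k x₀ : ℝ) :
    ∫ t, (c + k * (v t - x₀)) ∂μ = c * μ.real univ + k * (∫ t, v t ∂μ - x₀ * μ.real univ) := by
  have hv' : Integrable (fun t => v t - x₀) μ := hv.sub (integrable_const x₀)
  rw [integral_add (integrable_const c) (hv'.const_mul k),
    MeasureTheory.integral_const_mul, integral_sub hv (integrable_const x₀),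
    MeasureTheory.integral_const, MeasureTheory.integral_const]
  simp only [smul_eq_mul]
  ring

lemma ConcaveOn.integral_comp_le_of_endpoint_valued [IsFiniteMeasure μ] {Φ : ℝ → ℝ} {a b : ℝ}
    (hΦ : ConcaveOn ℝ (Icc a b) Φ) (hab : a ≤ b) (hΦc : ContinuousOn Φ (Icc a b))
    {u w : α → ℝ} (hu : Measurable u) (hu_mem : ∀ t, u t = a ∨ u t = b) (hw : Measurable w)
    (hw_mem : ∀ t, w t ∈ Icc a b) (huw : ∫ t, u t ∂μ = ∫ t, w t ∂μ) :
    ∫ t, Φ (u t) ∂μ ≤ ∫ t, Φ (w t) ∂μ := by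
  set ℓ : ℝ → ℝ := fun x => Φ a + slope Φ a b * (x - a)
  have hu_Icc : ∀ t, u t ∈ Icc a b := fun t => by
    rcases hu_mem t with h | h <;> simp [h, hab]
  have hΦu : ∀ t, Φ (u t) = ℓ (u t) := fun t => by
    rcases hu_mem t with h | h
    · simp [ℓ, h]
    · rcases hab.eq_or_lt with rfl | hlt
      · simp [ℓ, h]
      · simp only [ℓ, h, slope_def_field]; field_simp; ring
  have hu_int : Integrable u μ := continuousOn_id.integrable_comp_of_mem_Icc hab hu hu_Icc
  have hw_int : Integrable w μ := continuousOn_id.integrable_comp_of_mem_Icc hab hw hw_mem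
  calc ∫ t, Φ (u t) ∂μ = ∫ t, ℓ (u t) ∂μ := integral_congr_ae (ae_of_all _ hΦu)
    _ = ∫ t, ℓ (w t) ∂μ := by
      simp only [ℓ, integral_const_add_mul_sub hu_int, integral_const_add_mul_sub hw_int, huw]
    _ ≤ ∫ t, Φ (w t) ∂μ :=
      integral_mono (integrable_const _ |>.add ((hw_int.sub (integrable_const a)).const_mul _))
        (hΦc.integrable_comp_of_mem_Icc hab hw hw_mem)
        fun t => hΦ.add_slope_mul_le (hw_mem t)

end

theorem bangbang_optimal_single_input_general
    (τ Cmin Cmax Cbar : ℝ) (hτ : 0 < τ)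
    (h1 : Cmin < Cbar) (h2 : Cbar < Cmax)
    (Φ Φ' : ℝ → ℝ)
    (hconc : ConcaveOn ℝ (Set.Icc Cmin Cmax) Φ)
    (hderiv : ∀ x ∈ Set.Icc Cmin Cmax, HasDerivAt Φ (Φ' x) x)
    (Aminus : Set ℝ) (hA : MeasurableSet Aminus) (hAsub : Aminus ⊆ Set.Ico 0 τ)
    (hAmeas : volume Aminus = ENNReal.ofReal ((Cmax - Cbar) / (Cmax - Cmin) * τ))
    (u : ℝ → ℝ) (hu : ∀ t, u t = if t ∈ Aminus then Cmin else Cmax) :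
    (1 / τ) * ∫ t in (0 : ℝ)..τ, u t = Cbar ∧
    ∀ w : ℝ → ℝ, Measurable w → (∀ t, w t ∈ Set.Icc Cmin Cmax) →
      (1 / τ) * ∫ t in (0 : ℝ)..τ, w t = Cbar →
      ∫ t in (0 : ℝ)..τ, Φ (u t) ≤ ∫ t in (0 : ℝ)..τ, Φ (w t) := by
  have hCC : Cmax - Cmin ≠ 0 := by linarith
  rw [show u = fun t => if t ∈ Aminus then Cmin else Cmax from funext hu]
  have hvol : volume.real Aminus = (Cmax - Cbar) / (Cmax - Cmin) * τ := by
    rw [measureReal_def, hAmeas, ENNReal.toReal_ofReal]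
    exact mul_nonneg (div_nonneg (by linarith) (by linarith)) hτ.le
  have hu_int : ∫ t in (0 : ℝ)..τ, (if t ∈ Aminus then Cmin else Cmax) = Cbar * τ := by
    rw [intervalIntegral_ite_mem_of_subset_Ico hτ.le hA hAsub, hvol]
    field_simp
    ring
  refine ⟨by rw [hu_int]; field_simp, fun w hw hw_mem hw_avg => ?_⟩
  have huw :
      ∫ t in (0 : ℝ)..τ, (if t ∈ Aminus then Cmin else Cmax) = ∫ t in (0 : ℝ)..τ, w t := by
    rw [hu_int, ← hw_avg]; field_simp
  rw [integral_of_le hτ.le, integral_of_le hτ.le] at huw ⊢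
  exact hconc.integral_comp_le_of_endpoint_valued (h1.trans h2).le
    (fun x hx => (hderiv x hx).continuousAt.continuousWithinAt)
    (measurable_const.ite hA measurable_const) (fun t => by by_cases ht : t ∈ Aminus <;> simp [ht])
    hw hw_mem huw

theorem bangbang_optimal_single_input
    (τ Cmin Cmax Cbar : ℝ) (hτ : 0 < τ) (hC : 0 < Cmin)
    (h1 : Cmin < Cbar) (h2 : Cbar < Cmax)
    (Φ Φ' : ℝ → ℝ)
    (hconc : ConcaveOn ℝ (Set.Icc Cmin Cmax) Φ)
    (hderiv : ∀ x ∈ Set.Icc Cmin Cmax, HasDerivAt Φ (Φ' x) x)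
    (hanti : AntitoneOn Φ' (Set.Icc Cmin Cmax))
    (Aminus : Set ℝ) (hA : MeasurableSet Aminus) (hAsub : Aminus ⊆ Set.Ico 0 τ)
    (hAmeas : volume Aminus = ENNReal.ofReal ((Cmax - Cbar) / (Cmax - Cmin) * τ))
    (u : ℝ → ℝ) (hu : ∀ t, u t = if t ∈ Aminus then Cmin else Cmax) :
    (1 / τ) * ∫ t in (0 : ℝ)..τ, u t = Cbar ∧
    ∀ w : ℝ → ℝ, Measurable w → (∀ t, w t ∈ Set.Icc Cmin Cmax) →
      (1 / τ) * ∫ t in (0 : ℝ)..τ, w t = Cbar →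
      ∫ t in (0 : ℝ)..τ, Φ (u t) ≤ ∫ t in (0 : ℝ)..τ, Φ (w t) :=
  bangbang_optimal_single_input_general τ Cmin Cmax Cbar hτ h1 h2 Φ Φ' hconc hderiv Aminus hA hAsub
    hAmeas u hu
end

section
/- (Periodicity of the PFR solution with time-varying flow rate, $n>1$.) Let $v:\mathbb{R}\to[v_{min},v_{max}]$ with $v_{min}>0$ be measurable and $\tau$-periodic with $\int_0^\tau v(t)\,dt = L$, let $V(t)=\int_0^t v(\xi)\,d\xi$, and let $C_{A_0}$ be $\tau$-periodic with values in $[C_{min},C_{max}]$, $C_{min}>0$. Then for every $s\in\mathbb{R}$, $V(s+\tau) = V(s) + L$, the function $V$ is a strictly increasing bijection of $\mathbb{R}$, and the function $C_A(x,t) = [C_{A_0}(V^{-1}(V(t)-x))^{-(n-1)} + k(n-1)(t - V^{-1}(V(t)-x))]^{-1/(n-1)}$ satisfies $C_A(x, t+\tau) = C_A(x,t)$ for all $x\in[0,L]$, $t\in\mathbb{R}$. -/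
/-!
Since `vmin ≤ v`, the primitive `V` grows at least like `vmin * t`; being continuous, it is an
increasing bijection of `ℝ`. Periodicity of `v` makes `V` conjugate the shift by `τ` to the shift
by `L`, hence its inverse `W` conjugates the shift by `L` back to the shift by `τ`. So the foot
`W (V t - x)` of the characteristic through `(x, t)` moves by exactly `τ` when `t` does: the inlet
value `C0` there is unchanged by periodicity, and so is the residence time `t - W (V t - x)`.
-/

open Set MeasureTheory intervalIntegral Filter

lemma intervalIntegrable_of_mem_Icc {f : ℝ → ℝ} {m M : ℝ} (hf : Measurable f)
    (hrange : ∀ t, f t ∈ Icc m M) (a b : ℝ) : IntervalIntegrable f volume a b :=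
  (_root_.intervalIntegrable_const (c := max |m| |M|)).mono_fun' hf.aestronglyMeasurable
    (Eventually.of_forall fun t => abs_le_max_abs_abs (hrange t).1 (hrange t).2)

lemma mul_sub_le_integral_of_le {f : ℝ → ℝ} {m a b : ℝ} (hab : a ≤ b)
    (hfi : IntervalIntegrable f volume a b) (hf : ∀ t, m ≤ f t) :
    m * (b - a) ≤ ∫ t in a..b, f t := by
  simpa [mul_comm] using integral_mono_on hab intervalIntegrable_const hfi fun t _ => hf t

lemma strictMono_of_mul_sub_le {g : ℝ → ℝ} {m : ℝ} (hm : 0 < m)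
    (hg : ∀ a b, a ≤ b → m * (b - a) ≤ g b - g a) : StrictMono g := fun a b hab => by
  nlinarith [hg a b hab.le]

lemma surjective_of_mul_sub_le {g : ℝ → ℝ} {m : ℝ} (hcont : Continuous g) (hm : 0 < m)
    (hg : ∀ a b, a ≤ b → m * (b - a) ≤ g b - g a) : Function.Surjective g := by
  refine hcont.surjective ?_ ?_
  · refine tendsto_atTop_mono' atTop (eventually_atTop.mpr ⟨0, fun t ht => ?_⟩)
      (tendsto_atTop_add_const_left _ (g 0) (tendsto_id.const_mul_atTop hm))
    simpa using (by linarith [hg 0 t ht] : g 0 + m * t ≤ g t)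
  · refine tendsto_atBot_mono' atBot (eventually_atBot.mpr ⟨0, fun t ht => ?_⟩)
      (tendsto_atBot_add_const_left _ (g 0) (tendsto_id.const_mul_atBot hm))
    simpa using (by linarith [hg t 0 ht] : g t ≤ g 0 + m * t)

lemma primitive_add_period {f : ℝ → ℝ} (hfi : ∀ a b, IntervalIntegrable f volume a b) {T : ℝ}
    (hf : Function.Periodic f T) (s : ℝ) :
    ∫ t in (0 : ℝ)..s + T, f t = (∫ t in (0 : ℝ)..s, f t) + ∫ t in (0 : ℝ)..T, f t := by
  simpa using hf.intervalIntegral_add_eq_add 0 s hfi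

lemma mul_sub_le_primitive_sub {f : ℝ → ℝ} (hfi : ∀ a b, IntervalIntegrable f volume a b) {m : ℝ}
    (hf : ∀ t, m ≤ f t) (a b : ℝ) (hab : a ≤ b) :
    m * (b - a) ≤ (∫ t in (0 : ℝ)..b, f t) - ∫ t in (0 : ℝ)..a, f t := by
  rw [integral_interval_sub_left (hfi 0 b) (hfi 0 a)]
  exact mul_sub_le_integral_of_le hab (hfi a b) hf

theorem pfr_flowrate_periodicity_general
    (τ L k n vmin vmax : ℝ)
    (hvmin : 0 < vmin)
    (v : ℝ → ℝ) (hvmeas : Measurable v)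
    (hvrange : ∀ t, v t ∈ Set.Icc vmin vmax)
    (hvper : Function.Periodic v τ)
    (hres : ∫ t in (0 : ℝ)..τ, v t = L)
    (V : ℝ → ℝ) (hV : ∀ t, V t = ∫ s in (0 : ℝ)..t, v s)
    (C0 : ℝ → ℝ)
    (hC0per : Function.Periodic C0 τ) :
    (∀ s : ℝ, V (s + τ) = V s + L) ∧
    StrictMono V ∧ Function.Bijective V ∧
    ∀ W : ℝ → ℝ, Function.LeftInverse W V → Function.RightInverse W V →
      ∀ x ∈ Set.Icc (0 : ℝ) L, ∀ t : ℝ,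
        ((C0 (W (V (t + τ) - x))) ^ (-(n - 1)) +
            k * (n - 1) * ((t + τ) - W (V (t + τ) - x))) ^ (-(1 / (n - 1))) =
        ((C0 (W (V t - x))) ^ (-(n - 1)) +
            k * (n - 1) * (t - W (V t - x))) ^ (-(1 / (n - 1))) := by
  obtain rfl : V = fun t => ∫ s in (0 : ℝ)..t, v s := funext hV
  have hvi := intervalIntegrable_of_mem_Icc hvmeas hvrange
  have hadd : ∀ s, (∫ t in (0 : ℝ)..s + τ, v t) = (∫ t in (0 : ℝ)..s, v t) + L := fun s => by
    rw [primitive_add_period hvi hvper, hres]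
  have hgrowth := mul_sub_le_primitive_sub hvi fun t => (hvrange t).1
  have hmono := strictMono_of_mul_sub_le hvmin hgrowth
  refine ⟨hadd, hmono, ⟨hmono.injective,
    surjective_of_mul_sub_le (continuous_primitive hvi 0) hvmin hgrowth⟩, ?_⟩
  intro W hWl hWr x _ t
  have hW : Function.Semiconj W (· + L) (· + τ) :=
    Function.Semiconj.inverse_left (f := fun t => ∫ s in (0 : ℝ)..t, v s) hadd hWl hWr
  simp only [hadd, add_sub_right_comm _ L x, hW _, hC0per _]
  ring_nf

theorem pfr_flowrate_periodicity
    (τ L k n Cmin Cmax vmin vmax : ℝ)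
    (hτ : 0 < τ) (hL : 0 < L) (hk : 0 < k) (hn : 1 < n)
    (hvmin : 0 < vmin) (hvv : vmin ≤ vmax) (hCmin : 0 < Cmin) (hCC : Cmin ≤ Cmax)
    (v : ℝ → ℝ) (hvmeas : Measurable v)
    (hvrange : ∀ t, v t ∈ Set.Icc vmin vmax)
    (hvper : Function.Periodic v τ)
    (hres : ∫ t in (0 : ℝ)..τ, v t = L)
    (V : ℝ → ℝ) (hV : ∀ t, V t = ∫ s in (0 : ℝ)..t, v s)
    (C0 : ℝ → ℝ) (hC0range : ∀ t, C0 t ∈ Set.Icc Cmin Cmax)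
    (hC0per : Function.Periodic C0 τ) :
    (∀ s : ℝ, V (s + τ) = V s + L) ∧
    StrictMono V ∧ Function.Bijective V ∧
    ∀ W : ℝ → ℝ, Function.LeftInverse W V → Function.RightInverse W V →
      ∀ x ∈ Set.Icc (0 : ℝ) L, ∀ t : ℝ,
        ((C0 (W (V (t + τ) - x))) ^ (-(n - 1)) +
            k * (n - 1) * ((t + τ) - W (V (t + τ) - x))) ^ (-(1 / (n - 1))) =
        ((C0 (W (V t - x))) ^ (-(n - 1)) +
            k * (n - 1) * (t - W (V t - x))) ^ (-(1 / (n - 1))) :=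
  pfr_flowrate_periodicity_general τ L k n vmin vmax hvmin v hvmeas hvrange hvper hres V hV C0
    hC0per
end

section
/- (Cost reduction with controlled flow rate.) Under the assumptions that $v$ is measurable, $\tau$-periodic, positive, with $\int_0^\tau v = L$, and $C_{A_0}$ is measurable $\tau$-periodic with values in $[C_{min},C_{max}]$, $C_{min}>0$, and $n>1$, the cost $J = \frac{1}{\tau}\int_0^\tau C_A(L,t)\,v(t)\,dt$ with $C_A$ as in the method-of-characteristics formula equals $\frac{1}{\tau}\int_0^\tau \Psi(C_{A_0}(t))\,v(t)\,dt$, where $\Psi(\xi) = (\xi^{-(n-1)} + k(n-1)\tau)^{-1/(n-1)}$. -/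
/-!
Shifting by one period lowers the primitive `V` of the `τ`-periodic velocity by exactly the
residence integral `L = ∫₀^τ v`, so `W (V t - L) = t - τ`: every fluid element has spent exactly
one period `τ` in the reactor, and by periodicity it entered with concentration `C₀ (t - τ) = C₀ t`.
-/

open MeasureTheory intervalIntegral

theorem Function.Periodic.intervalIntegral_zero_eq_sub_period_add {E : Type*}
    [NormedAddCommGroup E] [NormedSpace ℝ E] {f : ℝ → E} {T : ℝ} (hf : Function.Periodic f T)
    (hT : T ≠ 0) (hint : IntervalIntegrable f volume 0 T) (t : ℝ) :
    ∫ x in 0..t, f x = (∫ x in 0..t - T, f x) + ∫ x in 0..T, f x := by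
  simpa using hf.intervalIntegral_add_eq_add 0 (t - T) (hf.intervalIntegrable₀ hT hint)

theorem pfr_cost_controlled_flowrate_general
    (τ L k n : ℝ) (hτ : 0 < τ) (hL : 0 < L)
    (v : ℝ → ℝ) (hvper : Function.Periodic v τ)
    (hres : ∫ t in (0 : ℝ)..τ, v t = L)
    (V : ℝ → ℝ) (hV : ∀ t, V t = ∫ s in (0 : ℝ)..t, v s)
    (W : ℝ → ℝ) (hW : Function.LeftInverse W V)
    (C0 : ℝ → ℝ) (hC0per : Function.Periodic C0 τ) :
    (1 / τ) * ∫ t in (0 : ℝ)..τ,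
        ((C0 (W (V t - L))) ^ (-(n - 1)) +
          k * (n - 1) * (t - W (V t - L))) ^ (-(1 / (n - 1))) * v t =
    (1 / τ) * ∫ t in (0 : ℝ)..τ,
        ((C0 t) ^ (-(n - 1)) + k * (n - 1) * τ) ^ (-(1 / (n - 1))) * v t := by
  have hv : IntervalIntegrable v volume 0 τ :=
    intervalIntegrable_of_integral_ne_zero (hres ▸ hL.ne')
  have hentry : ∀ t, W (V t - L) = t - τ := fun t => by
    rw [hV, hvper.intervalIntegral_zero_eq_sub_period_add hτ.ne' hv, hres, add_sub_cancel_right,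
      ← hV, hW]
  simp_rw [hentry, hC0per.sub_eq, sub_sub_cancel]

theorem pfr_cost_controlled_flowrate
    (τ L k n Cmin Cmax : ℝ) (hτ : 0 < τ) (hL : 0 < L) (hk : 0 < k) (hn : 1 < n)
    (hCmin : 0 < Cmin) (hCC : Cmin ≤ Cmax)
    (v : ℝ → ℝ) (hvmeas : Measurable v) (hvpos : ∀ t, 0 < v t)
    (hvper : Function.Periodic v τ)
    (hres : ∫ t in (0 : ℝ)..τ, v t = L)
    (V : ℝ → ℝ) (hV : ∀ t, V t = ∫ s in (0 : ℝ)..t, v s)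
    (W : ℝ → ℝ) (hW : Function.LeftInverse W V)
    (C0 : ℝ → ℝ) (hC0meas : Measurable C0)
    (hC0range : ∀ t, C0 t ∈ Set.Icc Cmin Cmax)
    (hC0per : Function.Periodic C0 τ) :
    (1 / τ) * ∫ t in (0 : ℝ)..τ,
        ((C0 (W (V t - L))) ^ (-(n - 1)) +
          k * (n - 1) * (t - W (V t - L))) ^ (-(1 / (n - 1))) * v t =
    (1 / τ) * ∫ t in (0 : ℝ)..τ,
        ((C0 t) ^ (-(n - 1)) + k * (n - 1) * τ) ^ (-(1 / (n - 1))) * v t :=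
  pfr_cost_controlled_flowrate_general τ L k n hτ hL v hvper hres V hV W hW C0 hC0per
end

section
/- (Two-input comparison lemma, flow-rate part.) Let $\Psi:[C_{min},C_{max}]\to(0,\infty)$ be increasing. Let $v:[0,\tau)\to[v_{min},v_{max}]$ be measurable with $\int_0^\tau v = L$, let $B^+, B^-$ partition $[0,\tau)$ with $\mu(B^+) = \frac{L-\tau v_{min}}{v_{max}-v_{min}}$, and define $v_b = v_{max}$ on $B^+$, $v_b = v_{min}$ on $B^-$. Let $A^+\subseteq B^-$, $A^- = [0,\tau)\setminus A^+$, and define $C_b = C_{max}$ on $A^+$, $C_b = C_{min}$ on $A^-$. Then $\int_0^\tau \Psi(C_b(t))(v_b(t)-v(t))\,dt \le \Psi(C_{min})\int_0^\tau (v_b(t)-v(t))\,dt = 0$. -/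
open Real Set MeasureTheory intervalIntegral Classical

/-! The bang-bang profile `v_b` has integral `v_min τ + (v_max - v_min) μ(B⁺) = L = ∫ v`, so
`v_b - v` integrates to zero. The weight `Ψ ∘ C_b` exceeds `Ψ(C_min)` only on `A⁺ ⊆ B⁻`, where
`v_b - v = v_min - v ≤ 0`; hence replacing it by the constant `Ψ(C_min)` can only raise the
integral. -/

section

variable {α : Type*} [MeasurableSpace α] {μ : Measure α} {s : Set α}

theorem integrableOn_of_mapsTo_Icc {f : α → ℝ} {a b : ℝ} (hs : MeasurableSet s) (hμs : μ s ≠ ⊤)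
    (hf : Measurable f) (hfs : MapsTo f s (Icc a b)) : IntegrableOn f s μ :=
  Measure.integrableOn_of_bounded (M := max |a| |b|) hμs hf.aestronglyMeasurable <|
    ae_restrict_of_forall_mem hs fun _ ht => abs_le_max_abs_abs (hfs ht).1 (hfs ht).2

theorem setIntegral_ite_const {B : Set α} (hB : MeasurableSet B) (hBs : B ⊆ s) (hμs : μ s ≠ ⊤)
    (a b : ℝ) :
    ∫ t in s, (if t ∈ B then a else b) ∂μ = b * μ.real s + (a - b) * μ.real B := by
  have hite : (fun t => if t ∈ B then a else b) = fun t => B.indicator (fun _ => a - b) t + b := by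
    ext t; by_cases h : t ∈ B <;> simp [h]
  have : IsFiniteMeasure (μ.restrict s) := isFiniteMeasure_restrict.2 hμs
  rw [hite, integral_add ((integrable_const _).indicator hB) (integrable_const b),
    integral_indicator_const _ hB, setIntegral_const, measureReal_restrict_apply hB,
    inter_eq_self_of_subset_left hBs, smul_eq_mul, smul_eq_mul]
  ring

theorem setIntegral_ite_mul_le {A : Set α} {f : α → ℝ} {a b : ℝ} (hs : MeasurableSet s)
    (hA : MeasurableSet A) (hf : IntegrableOn f s μ) (hab : a ≤ b)
    (hf_nonpos : ∀ t ∈ s ∩ A, f t ≤ 0) :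
    ∫ t in s, (if t ∈ A then b else a) * f t ∂μ ≤ a * ∫ t in s, f t ∂μ := by
  rw [← MeasureTheory.integral_const_mul]
  refine setIntegral_mono_on ?_ (hf.const_mul a) hs fun t ht => ?_
  · refine hf.bdd_mul (c := max |a| |b|)
      (Measurable.ite hA measurable_const measurable_const).aestronglyMeasurable
      (Filter.Eventually.of_forall fun t => ?_)
    split_ifs
    · exact le_max_right _ _
    · exact le_max_left _ _
  · split_ifs with htA
    · exact mul_le_mul_of_nonpos_right hab (hf_nonpos t ⟨ht, htA⟩)
    · exact le_rfl

end

theorem intervalIntegral_eq_setIntegral_Ico {a b : ℝ} (hab : a ≤ b) (f : ℝ → ℝ) :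
    ∫ t in a..b, f t = ∫ t in Ico a b, f t := by
  rw [intervalIntegral.integral_of_le hab, integral_Ico_eq_integral_Ioc]

theorem two_input_flowrate_comparison_general
    (τ L vmin vmax Cmin Cmax : ℝ) (hτ : 0 < τ)
    (hvv : vmin < vmax)
    (hL1 : vmin * τ ≤ L)
    (hCC : Cmin < Cmax)
    (Ψ : ℝ → ℝ)
    (hΨmono : MonotoneOn Ψ (Set.Icc Cmin Cmax))
    (v : ℝ → ℝ) (hvmeas : Measurable v)
    (hvrange : ∀ t ∈ Set.Ico (0 : ℝ) τ, v t ∈ Set.Icc vmin vmax)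
    (hres : ∫ t in (0 : ℝ)..τ, v t = L)
    (Bplus Bminus : Set ℝ) (hBp : MeasurableSet Bplus)
    (hBdisj : Disjoint Bplus Bminus) (hBunion : Bplus ∪ Bminus = Set.Ico 0 τ)
    (hBpmeas : volume Bplus = ENNReal.ofReal ((L - τ * vmin) / (vmax - vmin)))
    (vb : ℝ → ℝ) (hvb : ∀ t, vb t = if t ∈ Bplus then vmax else vmin)
    (Aplus : Set ℝ) (hAp : MeasurableSet Aplus) (hApsub : Aplus ⊆ Bminus)
    (Cb : ℝ → ℝ) (hCb : ∀ t, Cb t = if t ∈ Aplus then Cmax else Cmin) :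
    (∫ t in (0 : ℝ)..τ, Ψ (Cb t) * (vb t - v t) ≤
      Ψ Cmin * ∫ t in (0 : ℝ)..τ, (vb t - v t)) ∧
    Ψ Cmin * ∫ t in (0 : ℝ)..τ, (vb t - v t) = 0 := by
  obtain rfl : vb = _ := funext hvb
  obtain rfl : Cb = _ := funext hCb
  simp only [intervalIntegral_eq_setIntegral_Ico hτ.le, apply_ite Ψ] at hres ⊢
  have hμ : volume (Ico (0 : ℝ) τ) ≠ ⊤ := measure_Ico_lt_top.ne
  have hv_int : IntegrableOn v (Ico 0 τ) :=
    integrableOn_of_mapsTo_Icc measurableSet_Ico hμ hvmeas hvrange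
  have hvb_int : IntegrableOn (fun t => if t ∈ Bplus then vmax else vmin) (Ico 0 τ) :=
    integrableOn_of_mapsTo_Icc (a := vmin) (b := vmax) measurableSet_Ico hμ
      (Measurable.ite hBp measurable_const measurable_const) fun t _ => by
        split_ifs
        exacts [right_mem_Icc.2 hvv.le, left_mem_Icc.2 hvv.le]
  have hvb_L : ∫ t in Ico 0 τ, (if t ∈ Bplus then vmax else vmin) = L := by
    rw [setIntegral_ite_const hBp (hBunion ▸ subset_union_left) hμ, Measure.real, Measure.real,
      hBpmeas, Real.volume_Ico, ENNReal.toReal_ofReal (by linarith),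
      ENNReal.toReal_ofReal (div_nonneg (by linarith) (by linarith)),
      mul_div_cancel₀ _ (sub_ne_zero.2 hvv.ne')]
    ring
  have hbalance : ∫ t in Ico 0 τ, ((if t ∈ Bplus then vmax else vmin) - v t) = 0 := by
    rw [integral_sub hvb_int hv_int, hvb_L, hres, sub_self]
  refine ⟨setIntegral_ite_mul_le measurableSet_Ico hAp (hvb_int.sub hv_int)
    (hΨmono (left_mem_Icc.2 hCC.le) (right_mem_Icc.2 hCC.le) hCC.le) fun t ⟨ht, htA⟩ => ?_,
    by rw [hbalance, mul_zero]⟩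
  have htB : t ∉ Bplus := disjoint_right.1 hBdisj (hApsub htA)
  simp only [htB, if_false, sub_nonpos]
  exact (hvrange t ht).1

theorem two_input_flowrate_comparison
    (τ L vmin vmax Cmin Cmax : ℝ) (hτ : 0 < τ)
    (hvmin : 0 < vmin) (hvv : vmin < vmax)
    (hL1 : vmin * τ ≤ L) (hL2 : L ≤ vmax * τ)
    (hCmin : 0 < Cmin) (hCC : Cmin < Cmax)
    (Ψ : ℝ → ℝ) (hΨpos : ∀ x ∈ Set.Icc Cmin Cmax, 0 < Ψ x)
    (hΨmono : MonotoneOn Ψ (Set.Icc Cmin Cmax))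
    (v : ℝ → ℝ) (hvmeas : Measurable v)
    (hvrange : ∀ t ∈ Set.Ico (0 : ℝ) τ, v t ∈ Set.Icc vmin vmax)
    (hres : ∫ t in (0 : ℝ)..τ, v t = L)
    (Bplus Bminus : Set ℝ) (hBp : MeasurableSet Bplus) (hBm : MeasurableSet Bminus)
    (hBdisj : Disjoint Bplus Bminus) (hBunion : Bplus ∪ Bminus = Set.Ico 0 τ)
    (hBpmeas : volume Bplus = ENNReal.ofReal ((L - τ * vmin) / (vmax - vmin)))
    (vb : ℝ → ℝ) (hvb : ∀ t, vb t = if t ∈ Bplus then vmax else vmin)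
    (Aplus : Set ℝ) (hAp : MeasurableSet Aplus) (hApsub : Aplus ⊆ Bminus)
    (Cb : ℝ → ℝ) (hCb : ∀ t, Cb t = if t ∈ Aplus then Cmax else Cmin) :
    (∫ t in (0 : ℝ)..τ, Ψ (Cb t) * (vb t - v t) ≤
      Ψ Cmin * ∫ t in (0 : ℝ)..τ, (vb t - v t)) ∧
    Ψ Cmin * ∫ t in (0 : ℝ)..τ, (vb t - v t) = 0 :=
  two_input_flowrate_comparison_general τ L vmin vmax Cmin Cmax hτ hvv hL1 hCC Ψ hΨmono v hvmeas
    hvrange hres Bplus Bminus hBp hBdisj hBunion hBpmeas vb hvb Aplus hAp hApsub Cb hCb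
end
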